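/- arXiv:math-ph/0112018 — 2 statements merged into one kernel-verified Lean document; each statement's English description precedes it below -/
import Mathlib

section
/- For Φ ∈ C²(Ω̄_II) with Ω_II = (−δ,δ)×(0,d), writing Φ₋(y) = Φ(−δ,y), Φ₊(y) = Φ(δ,y), one has ‖Φ‖²_{L²(Ω_II)} ≤ 2δ ( ‖Φ₋‖_{L²(0,d)} ‖Φ₊‖_{L²(0,d)} + √(2δ) ‖|Φ₋|+|Φ₊|‖_{L²(0,d)} ‖∂Φ/∂x‖_{L²(Ω_II)} + 2δ ‖∂Φ/∂x‖²_{L²(Ω_II)} ). -/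
open MeasureTheory Set Real

/-!
On each horizontal segment the fundamental theorem of calculus, started from either end, gives
`‖Φ(x,y)‖ ≤ ‖Φ∓(y)‖ + J(y)` with `J(y) = ∫ ‖∂ₓΦ(·,y)‖ ≤ K(y) := √(2δ ∫ ‖∂ₓΦ(·,y)‖²)`
(Cauchy–Schwarz). Multiplying the two bounds gives `‖Φ(x,y)‖² ≤ (‖Φ₋‖ + K)(‖Φ₊‖ + K)`;
integrating in `x`, expanding, and applying Cauchy–Schwarz in `y` to `‖Φ₋‖‖Φ₊‖` and
`(‖Φ₋‖ + ‖Φ₊‖) K` yields the estimate, since `∫ K² = 2δ ‖∂ₓΦ‖²`.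
-/

section CauchySchwarz

variable {α : Type*} [MeasurableSpace α] {μ : Measure α}

theorem integral_mul_le_sqrt_mul_sqrt {f g : α → ℝ} (hf0 : 0 ≤ᵐ[μ] f) (hg0 : 0 ≤ᵐ[μ] g)
    (hf : MemLp f 2 μ) (hg : MemLp g 2 μ) :
    ∫ x, f x * g x ∂μ ≤ √(∫ x, f x ^ 2 ∂μ) * √(∫ x, g x ^ 2 ∂μ) := by
  have := integral_mul_le_Lp_mul_Lq_of_nonneg Real.HolderConjugate.two_two hf0 hg0
    (by simpa using hf) (by simpa using hg)
  simpa [Real.sqrt_eq_rpow] using this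

theorem integral_norm_le_sqrt_measureReal_mul {E : Type*} [NormedAddCommGroup E]
    [IsFiniteMeasure μ] {f : α → E} (hf : MemLp f 2 μ) :
    ∫ x, ‖f x‖ ∂μ ≤ √(μ.real univ * ∫ x, ‖f x‖ ^ 2 ∂μ) := by
  have := integral_mul_le_sqrt_mul_sqrt (ae_of_all μ fun x => norm_nonneg (f x))
    (ae_of_all μ fun _ => zero_le_one) hf.norm (memLp_const 1)
  simpa [Real.sqrt_mul measureReal_nonneg, mul_comm] using this

theorem integral_add_mul_add_le {A B K : α → ℝ} (hA0 : 0 ≤ᵐ[μ] A) (hB0 : 0 ≤ᵐ[μ] B)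
    (hK0 : 0 ≤ᵐ[μ] K) (hA : MemLp A 2 μ) (hB : MemLp B 2 μ) (hK : MemLp K 2 μ) :
    ∫ x, (A x + K x) * (B x + K x) ∂μ ≤
      √(∫ x, A x ^ 2 ∂μ) * √(∫ x, B x ^ 2 ∂μ) +
        √(∫ x, (A x + B x) ^ 2 ∂μ) * √(∫ x, K x ^ 2 ∂μ) + ∫ x, K x ^ 2 ∂μ := by
  have hAB : Integrable (fun x => A x * B x) μ := hA.integrable_mul hB
  have hABK : Integrable (fun x => (A x + B x) * K x) μ := (hA.add hB).integrable_mul hK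
  have hKK : Integrable (fun x => K x ^ 2) μ := (memLp_two_iff_integrable_sq hK.1).1 hK
  have hexpand : ∀ x, (A x + K x) * (B x + K x) = A x * B x + (A x + B x) * K x + K x ^ 2 :=
    fun x => by ring
  simp only [hexpand]
  rw [integral_add (f := fun x => A x * B x + (A x + B x) * K x) (hAB.add hABK) hKK,
    integral_add hAB hABK]
  gcongr
  · exact integral_mul_le_sqrt_mul_sqrt hA0 hB0 hA hB
  · refine integral_mul_le_sqrt_mul_sqrt ?_ hK0 (hA.add hB) hK
    filter_upwards [hA0, hB0] with x hAx hBx using add_nonneg hAx hBx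

theorem Integrable.sqrt_memLp_two {h : α → ℝ} (hh : Integrable h μ) (hh0 : 0 ≤ᵐ[μ] h) :
    MemLp (fun x => √(h x)) 2 μ := by
  refine (memLp_two_iff_integrable_sq (continuous_sqrt.comp_aestronglyMeasurable hh.1)).2 ?_
  refine hh.congr ?_
  filter_upwards [hh0] with x hx using (sq_sqrt hx).symm

end CauchySchwarz

variable {E : Type*} [NormedAddCommGroup E]

theorem ContinuousOn.memLp_restrict_Ioo {f : ℝ → E} {a b : ℝ} (hf : ContinuousOn f (Icc a b))
    (p : ENNReal) : MemLp f p (volume.restrict (Ioo a b)) := by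
  obtain ⟨C, hC⟩ := isCompact_Icc.exists_bound_of_continuousOn hf
  exact .of_bound ((hf.mono Ioo_subset_Icc_self).aestronglyMeasurable measurableSet_Ioo) C
    (ae_restrict_of_forall_mem measurableSet_Ioo fun x hx => hC x (Ioo_subset_Icc_self hx))

variable [NormedSpace ℝ E]

section Interval

variable [CompleteSpace E] {u u' : ℝ → E} {a b : ℝ}

theorem norm_sub_le_integral_norm_deriv (hu : ContinuousOn u (Icc a b))
    (hderiv : ∀ t ∈ Ioo a b, HasDerivAt u (u' t) t) (hu' : IntegrableOn u' (Ioo a b))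
    {s t : ℝ} (has : a ≤ s) (hst : s ≤ t) (htb : t ≤ b) :
    ‖u t - u s‖ ≤ ∫ τ in Ioo a b, ‖u' τ‖ := by
  have hsub : Ioo s t ⊆ Ioo a b := Ioo_subset_Ioo has htb
  rw [← intervalIntegral.integral_eq_sub_of_hasDerivAt_of_le hst
    (hu.mono (Icc_subset_Icc has htb)) (fun τ hτ => hderiv τ (hsub hτ))
    ((intervalIntegrable_iff_integrableOn_Ioo_of_le hst).2 (hu'.mono_set hsub))]
  calc ‖∫ τ in s..t, u' τ‖ ≤ ∫ τ in s..t, ‖u' τ‖ :=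
        intervalIntegral.norm_integral_le_integral_norm hst
    _ = ∫ τ in Ioo s t, ‖u' τ‖ := by
        rw [intervalIntegral.integral_of_le hst, integral_Ioc_eq_integral_Ioo]
    _ ≤ ∫ τ in Ioo a b, ‖u' τ‖ :=
        setIntegral_mono_set hu'.norm (ae_of_all _ fun τ => norm_nonneg _) hsub.eventuallyLE

theorem norm_sq_le_of_hasDerivAt (hu : ContinuousOn u (Icc a b))
    (hderiv : ∀ t ∈ Ioo a b, HasDerivAt u (u' t) t) (hu' : MemLp u' 2 (volume.restrict (Ioo a b)))
    {x : ℝ} (hx : x ∈ Icc a b) :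
    ‖u x‖ ^ 2 ≤ (‖u a‖ + √((b - a) * ∫ t in Ioo a b, ‖u' t‖ ^ 2)) *
      (‖u b‖ + √((b - a) * ∫ t in Ioo a b, ‖u' t‖ ^ 2)) := by
  have hab : a ≤ b := hx.1.trans hx.2
  have hJ : ∫ t in Ioo a b, ‖u' t‖ ≤ √((b - a) * ∫ t in Ioo a b, ‖u' t‖ ^ 2) := by
    simpa [Real.volume_real_Ioo_of_le hab] using integral_norm_le_sqrt_measureReal_mul hu'
  have hu'int : IntegrableOn u' (Ioo a b) := hu'.integrable one_le_two
  have hleft : ‖u x‖ ≤ ‖u a‖ + √((b - a) * ∫ t in Ioo a b, ‖u' t‖ ^ 2) := by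
    calc ‖u x‖ ≤ ‖u a‖ + ‖u x - u a‖ := norm_le_norm_add_norm_sub' _ _
      _ ≤ _ := by grw [norm_sub_le_integral_norm_deriv hu hderiv hu'int le_rfl hx.1 hx.2, hJ]
  have hright : ‖u x‖ ≤ ‖u b‖ + √((b - a) * ∫ t in Ioo a b, ‖u' t‖ ^ 2) := by
    calc ‖u x‖ ≤ ‖u b‖ + ‖u b - u x‖ := norm_le_norm_add_norm_sub _ _
      _ ≤ _ := by grw [norm_sub_le_integral_norm_deriv hu hderiv hu'int hx.1 hx.2 le_rfl, hJ]
  rw [sq]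
  exact mul_le_mul hleft hright (norm_nonneg _) (by positivity)

theorem setIntegral_norm_sq_le_of_hasDerivAt (hab : a ≤ b) (hu : ContinuousOn u (Icc a b))
    (hderiv : ∀ t ∈ Ioo a b, HasDerivAt u (u' t) t) (hu' : MemLp u' 2 (volume.restrict (Ioo a b))) :
    ∫ x in Ioo a b, ‖u x‖ ^ 2 ≤ (b - a) * ((‖u a‖ + √((b - a) * ∫ t in Ioo a b, ‖u' t‖ ^ 2)) *
      (‖u b‖ + √((b - a) * ∫ t in Ioo a b, ‖u' t‖ ^ 2))) := by
  calc ∫ x in Ioo a b, ‖u x‖ ^ 2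
      ≤ ∫ _ in Ioo a b, (‖u a‖ + √((b - a) * ∫ t in Ioo a b, ‖u' t‖ ^ 2)) *
          (‖u b‖ + √((b - a) * ∫ t in Ioo a b, ‖u' t‖ ^ 2)) :=
        integral_mono_of_nonneg (ae_of_all _ fun _ => by positivity) (integrable_const _)
          (ae_restrict_of_forall_mem measurableSet_Ioo fun x hx =>
            norm_sq_le_of_hasDerivAt hu hderiv hu' (Ioo_subset_Icc_self hx))
    _ = _ := by simp [Real.volume_real_Ioo_of_le hab]

end Interval

theorem setIntegral_prod_symm {α β : Type*} [MeasurableSpace α] [MeasurableSpace β]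
    {μ : Measure α} {ν : Measure β} [SFinite μ] [SFinite ν] {f : α × β → E} {s : Set α}
    {t : Set β} (hf : IntegrableOn f (s ×ˢ t) (μ.prod ν)) :
    ∫ z in s ×ˢ t, f z ∂μ.prod ν = ∫ y in t, ∫ x in s, f (x, y) ∂μ ∂ν := by
  rw [IntegrableOn, ← Measure.prod_restrict] at hf
  rw [← Measure.prod_restrict, integral_prod_symm f hf]

theorem setIntegral_rectangle_norm_sq_le [CompleteSpace E] {Φ Ψ : ℝ × ℝ → E} {a b c d : ℝ}
    (hab : a ≤ b) (hΦ : ContinuousOn Φ (Icc a b ×ˢ Icc c d))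
    (hΨ : ContinuousOn Ψ (Icc a b ×ˢ Icc c d))
    (hderiv : ∀ p ∈ Ioo a b ×ˢ Ioo c d, HasDerivAt (fun x => Φ (x, p.2)) (Ψ p) p.1) :
    ∫ p in Ioo a b ×ˢ Ioo c d, ‖Φ p‖ ^ 2 ≤ (b - a) *
      (√(∫ y in Ioo c d, ‖Φ (a, y)‖ ^ 2) * √(∫ y in Ioo c d, ‖Φ (b, y)‖ ^ 2) +
        √(b - a) * √(∫ y in Ioo c d, (‖Φ (a, y)‖ + ‖Φ (b, y)‖) ^ 2) *
          √(∫ p in Ioo a b ×ˢ Ioo c d, ‖Ψ p‖ ^ 2) +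
        (b - a) * ∫ p in Ioo a b ×ˢ Ioo c d, ‖Ψ p‖ ^ 2) := by
  have hSR : Ioo a b ×ˢ Ioo c d ⊆ Icc a b ×ˢ Icc c d :=
    prod_mono Ioo_subset_Icc_self Ioo_subset_Icc_self
  have hR : IsCompact (Icc a b ×ˢ Icc c d) := isCompact_Icc.prod isCompact_Icc
  have hΦsq : IntegrableOn (fun p => ‖Φ p‖ ^ 2) (Ioo a b ×ˢ Ioo c d) :=
    ((hΦ.norm.pow 2).integrableOn_compact hR).mono_set hSR
  have hΨsq : IntegrableOn (fun p => ‖Ψ p‖ ^ 2) (Ioo a b ×ˢ Ioo c d) :=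
    ((hΨ.norm.pow 2).integrableOn_compact hR).mono_set hSR
  have hedge : ∀ x ∈ Icc a b, ContinuousOn (fun y => ‖Φ (x, y)‖) (Icc c d) := fun x hx =>
    (hΦ.comp (continuous_const.prodMk continuous_id).continuousOn fun y hy => ⟨hx, hy⟩).norm
  set h : ℝ → ℝ := fun y => ∫ x in Ioo a b, ‖Ψ (x, y)‖ ^ 2
  set K : ℝ → ℝ := fun y => √((b - a) * h y)
  have hh : Integrable h (volume.restrict (Ioo c d)) := by
    rw [IntegrableOn, Measure.volume_eq_prod, ← Measure.prod_restrict] at hΨsq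
    exact hΨsq.integral_prod_right
  have hK0 : ∀ y, 0 ≤ (b - a) * h y := fun y =>
    mul_nonneg (sub_nonneg.2 hab) (integral_nonneg fun _ => by positivity)
  have hK : MemLp K 2 (volume.restrict (Ioo c d)) :=
    Integrable.sqrt_memLp_two (hh.const_mul (b - a)) (ae_of_all _ hK0)
  have hslice : ∀ y ∈ Ioo c d, ∫ x in Ioo a b, ‖Φ (x, y)‖ ^ 2 ≤
      (b - a) * ((‖Φ (a, y)‖ + K y) * (‖Φ (b, y)‖ + K y)) := fun y hy =>
    setIntegral_norm_sq_le_of_hasDerivAt hab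
      (hΦ.comp (continuous_id.prodMk continuous_const).continuousOn
        fun x hx => ⟨hx, Ioo_subset_Icc_self hy⟩)
      (fun x hx => hderiv (x, y) ⟨hx, hy⟩)
      ((hΨ.comp (continuous_id.prodMk continuous_const).continuousOn
        fun x hx => ⟨hx, Ioo_subset_Icc_self hy⟩).memLp_restrict_Ioo 2)
  have hA := (hedge a (left_mem_Icc.2 hab)).memLp_restrict_Ioo 2
  have hB := (hedge b (right_mem_Icc.2 hab)).memLp_restrict_Ioo 2
  have hCS := integral_add_mul_add_le (ae_of_all _ fun y => norm_nonneg (Φ (a, y)))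
    (ae_of_all _ fun y => norm_nonneg (Φ (b, y))) (ae_of_all _ fun y => sqrt_nonneg _) hA hB hK
  have hKQ : ∫ y in Ioo c d, K y ^ 2 = (b - a) * ∫ p in Ioo a b ×ˢ Ioo c d, ‖Ψ p‖ ^ 2 := by
    simp only [K, fun y => sq_sqrt (hK0 y), integral_const_mul]
    exact congrArg _ (setIntegral_prod_symm hΨsq).symm
  rw [hKQ, sqrt_mul (sub_nonneg.2 hab)] at hCS
  calc ∫ p in Ioo a b ×ˢ Ioo c d, ‖Φ p‖ ^ 2
      = ∫ y in Ioo c d, ∫ x in Ioo a b, ‖Φ (x, y)‖ ^ 2 :=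
        setIntegral_prod_symm hΦsq
    _ ≤ ∫ y in Ioo c d, (b - a) * ((‖Φ (a, y)‖ + K y) * (‖Φ (b, y)‖ + K y)) :=
        integral_mono_of_nonneg (ae_of_all _ fun _ => integral_nonneg fun _ => by positivity)
          (((hA.add hK).integrable_mul (hB.add hK)).const_mul _)
          (ae_restrict_of_forall_mem measurableSet_Ioo hslice)
    _ = (b - a) * ∫ y in Ioo c d, (‖Φ (a, y)‖ + K y) * (‖Φ (b, y)‖ + K y) := integral_const_mul _ _
    _ ≤ _ := mul_le_mul_of_nonneg_left (hCS.trans_eq (by ring)) (sub_nonneg.2 hab)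

theorem HasFDerivAt.hasDerivAt_fst_slice {Φ : ℝ × ℝ → E} {Φ' : ℝ × ℝ →L[ℝ] E} {p : ℝ × ℝ}
    (h : HasFDerivAt Φ Φ' p) : HasDerivAt (fun x => Φ (x, p.2)) (Φ' (1, 0)) p.1 :=
  h.comp_hasDerivAt p.1 ((hasDerivAt_id p.1).prodMk (hasDerivAt_const p.1 p.2))

/-- For `Φ ∈ C²` on the closed rectangle `Ω̄_II = [−δ,δ]×[0,d]`, with boundary traces
`Φ∓(y) = Φ(∓δ,y)`, one has
`‖Φ‖²_{L²(Ω_II)} ≤ 2δ(‖Φ₋‖‖Φ₊‖ + √(2δ)‖|Φ₋|+|Φ₊|‖ ‖∂ₓΦ‖ + 2δ‖∂ₓΦ‖²)`. -/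
theorem stmt12 (d δ : ℝ) (hd : 0 < d) (hδ : 0 < δ) (Φ : ℝ × ℝ → ℂ)
    (hΦ : ContDiffOn ℝ 2 Φ (Set.Icc (-δ) δ ×ˢ Set.Icc 0 d)) :
    (∫ p in Set.Ioo (-δ) δ ×ˢ Set.Ioo (0 : ℝ) d, ‖Φ p‖ ^ 2)
      ≤ 2 * δ *
        (Real.sqrt (∫ y in Set.Ioo (0 : ℝ) d, ‖Φ (-δ, y)‖ ^ 2) *
            Real.sqrt (∫ y in Set.Ioo (0 : ℝ) d, ‖Φ (δ, y)‖ ^ 2)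
          + Real.sqrt (2 * δ) *
            Real.sqrt (∫ y in Set.Ioo (0 : ℝ) d, (‖Φ (-δ, y)‖ + ‖Φ (δ, y)‖) ^ 2) *
            Real.sqrt (∫ p in Set.Ioo (-δ) δ ×ˢ Set.Ioo (0 : ℝ) d,
              ‖deriv (fun x => Φ (x, p.2)) p.1‖ ^ 2)
          + 2 * δ * ∫ p in Set.Ioo (-δ) δ ×ˢ Set.Ioo (0 : ℝ) d,
              ‖deriv (fun x => Φ (x, p.2)) p.1‖ ^ 2) := by
  set R := Icc (-δ) δ ×ˢ Icc (0 : ℝ) d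
  have hderiv : ∀ p ∈ Ioo (-δ) δ ×ˢ Ioo (0 : ℝ) d,
      HasDerivAt (fun x => Φ (x, p.2)) (fderivWithin ℝ Φ R p (1, 0)) p.1 := fun p hp => by
    have hRp : R ∈ nhds p := Filter.mem_of_superset ((isOpen_Ioo.prod isOpen_Ioo).mem_nhds hp)
      (prod_mono Ioo_subset_Icc_self Ioo_subset_Icc_self)
    rw [fderivWithin_of_mem_nhds hRp]
    exact ((hΦ.differentiableOn two_ne_zero).differentiableAt hRp).hasFDerivAt.hasDerivAt_fst_slice
  -- `fderivWithin` on the closed rectangle extends `∂ₓΦ` continuously up to its boundary.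
  have hΨ : ContinuousOn (fun p => fderivWithin ℝ Φ R p (1, 0)) R :=
    (hΦ.continuousOn_fderivWithin ((uniqueDiffOn_Icc (neg_lt_self hδ)).prod (uniqueDiffOn_Icc hd))
      one_le_two).clm_apply continuousOn_const
  have hbound := setIntegral_rectangle_norm_sq_le (neg_le_self hδ.le) hΦ.continuousOn hΨ hderiv
  rw [sub_neg_eq_add, ← two_mul] at hbound
  have hQ : ∫ p in Ioo (-δ) δ ×ˢ Ioo (0 : ℝ) d, ‖deriv (fun x => Φ (x, p.2)) p.1‖ ^ 2 =
      ∫ p in Ioo (-δ) δ ×ˢ Ioo (0 : ℝ) d, ‖fderivWithin ℝ Φ R p (1, 0)‖ ^ 2 :=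
    setIntegral_congr_fun ((isOpen_Ioo.prod isOpen_Ioo).measurableSet)
      fun p hp => by simp only [(hderiv p hp).deriv]
  rwa [hQ]
end

section
/- Let f(r,φ) = ξ(r) r^(1/2) sin(φ/2) in polar coordinates centered at a boundary point, where ξ ∈ C^∞(0,∞), ξ = 1 on (0,R/2), ξ = 0 for r > R. Then f ∈ H¹ of the half-disk {0 < r < R, 0 < φ < π}, Δf ∈ L² of the half-disk, f vanishes on {φ = 0}, ∂f/∂φ vanishes on {φ = π}, but f ∉ H² of the half-disk. -/
open MeasureTheory Set Real

noncomputable section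

/-- The Guseva-type function `f(r,φ) = ξ(r) r^(1/2) sin(φ/2)` in polar coordinates. -/
def guseva (ξ : ℝ → ℝ) (p : ℝ × ℝ) : ℝ :=
  ξ p.1 * p.1 ^ ((1 : ℝ) / 2) * Real.sin (p.2 / 2)

/-- The half-disk in polar coordinates. -/
def halfDisk (R : ℝ) : Set (ℝ × ℝ) := Set.Ioo 0 R ×ˢ Set.Ioo 0 π

namespace GA

/-- First radial derivative coefficient. -/
def D1 (ξ : ℝ → ℝ) (r : ℝ) : ℝ :=
  deriv ξ r * r ^ ((1:ℝ)/2) + ξ r * ((1/2) * r ^ (-(1:ℝ)/2))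

/-- Second radial derivative coefficient. -/
def D2 (ξ : ℝ → ℝ) (r : ℝ) : ℝ :=
  (deriv (deriv ξ) r * r ^ ((1:ℝ)/2) + deriv ξ r * ((1/2) * r ^ (-(1:ℝ)/2)))
  + (deriv ξ r * ((1/2) * r ^ (-(1:ℝ)/2)) + ξ r * ((1/2) * (-(1/2) * r ^ (-(3:ℝ)/2))))

variable {ξ : ℝ → ℝ}

theorem hdiff (hξ : ContDiffOn ℝ (⊤ : ℕ∞) ξ (Set.Ioi 0)) {r : ℝ} (hr : 0 < r) :
    DifferentiableAt ℝ ξ r :=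
  (hξ.differentiableOn (by simp)).differentiableAt (Ioi_mem_nhds hr)

theorem hdiff' (hξ : ContDiffOn ℝ (⊤ : ℕ∞) ξ (Set.Ioi 0)) {r : ℝ} (hr : 0 < r) :
    DifferentiableAt ℝ (deriv ξ) r :=
  hdiff (hξ.deriv_of_isOpen (m := (⊤ : ℕ∞)) isOpen_Ioi (by simp)) hr

theorem hd_r (hξ : ContDiffOn ℝ (⊤ : ℕ∞) ξ (Set.Ioi 0)) {r : ℝ} (hr : 0 < r) (φ : ℝ) :
    HasDerivAt (fun s => guseva ξ (s, φ)) (D1 ξ r * Real.sin (φ/2)) r := by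
  have h1 : HasDerivAt (fun s : ℝ => s ^ ((1:ℝ)/2)) ((1/2) * r ^ (-(1:ℝ)/2)) r := by
    have := Real.hasDerivAt_rpow_const (x := r) (p := (1/2)) (Or.inl hr.ne')
    convert this using 2; norm_num
  exact (((hdiff hξ hr).hasDerivAt.mul h1).mul_const (Real.sin (φ/2)))

theorem hd_rr (hξ : ContDiffOn ℝ (⊤ : ℕ∞) ξ (Set.Ioi 0)) {r : ℝ} (hr : 0 < r) (φ : ℝ) :
    HasDerivAt (fun s => D1 ξ s * Real.sin (φ/2)) (D2 ξ r * Real.sin (φ/2)) r := by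
  have h1 : HasDerivAt (fun s : ℝ => s ^ ((1:ℝ)/2)) ((1/2) * r ^ (-(1:ℝ)/2)) r := by
    have := Real.hasDerivAt_rpow_const (x := r) (p := (1/2)) (Or.inl hr.ne')
    convert this using 2; norm_num
  have h2 : HasDerivAt (fun s : ℝ => (1/2) * s ^ (-(1:ℝ)/2)) ((1/2) * (-(1/2) * r ^ (-(3:ℝ)/2))) r := by
    have := (Real.hasDerivAt_rpow_const (x := r) (p := (-(1:ℝ)/2)) (Or.inl hr.ne')).const_mul (1/2 : ℝ)
    rw [show (-(3:ℝ)/2) = -(1:ℝ)/2 - 1 by norm_num]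
    simpa [neg_div] using this
  exact ((((hdiff' hξ hr).hasDerivAt.mul h1).add ((hdiff hξ hr).hasDerivAt.mul h2)).mul_const _)

theorem deriv_r (hξ : ContDiffOn ℝ (⊤ : ℕ∞) ξ (Set.Ioi 0)) {r : ℝ} (hr : 0 < r) (φ : ℝ) :
    deriv (fun s => guseva ξ (s, φ)) r = D1 ξ r * Real.sin (φ/2) :=
  (hd_r hξ hr φ).deriv

theorem deriv_rr (hξ : ContDiffOn ℝ (⊤ : ℕ∞) ξ (Set.Ioi 0)) {r : ℝ} (hr : 0 < r) (φ : ℝ) :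
    deriv (deriv (fun s => guseva ξ (s, φ))) r = D2 ξ r * Real.sin (φ/2) := by
  have heq : deriv (fun s => guseva ξ (s, φ)) =ᶠ[nhds r] fun s => D1 ξ s * Real.sin (φ/2) :=
    Filter.eventuallyEq_of_mem (Ioi_mem_nhds hr) (fun s hs => deriv_r hξ hs φ)
  rw [heq.deriv_eq]
  exact (hd_rr hξ hr φ).deriv

theorem hd_t (ξ : ℝ → ℝ) (r φ : ℝ) :
    HasDerivAt (fun t => guseva ξ (r, t))
      (ξ r * r ^ ((1:ℝ)/2) * (Real.cos (φ/2) * (1/2))) φ := by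
  have h := (((hasDerivAt_id φ).div_const 2).sin).const_mul (ξ r * r ^ ((1:ℝ)/2))
  simpa [guseva] using h

theorem deriv_t (ξ : ℝ → ℝ) (r : ℝ) :
    deriv (fun t => guseva ξ (r, t))
      = fun t => ξ r * r ^ ((1:ℝ)/2) * (Real.cos (t/2) * (1/2)) :=
  funext fun t => (hd_t ξ r t).deriv

theorem deriv_tt (ξ : ℝ → ℝ) (r φ : ℝ) :
    deriv (deriv (fun t => guseva ξ (r, t))) φ
      = ξ r * r ^ ((1:ℝ)/2) * (-Real.sin (φ/2) * (1/2) * (1/2)) := by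
  rw [deriv_t]
  exact (((((hasDerivAt_id φ).div_const 2).cos).mul_const (1/2 : ℝ)).const_mul _).deriv

theorem upow {r : ℝ} (hr : 0 < r) :
    (r ^ ((1:ℝ)/2))^2 = r ∧ r ^ (-(1:ℝ)/2) = (r ^ ((1:ℝ)/2))⁻¹
      ∧ r ^ (-(3:ℝ)/2) = ((r ^ ((1:ℝ)/2))^3)⁻¹ := by
  refine ⟨?_, ?_, ?_⟩
  · rw [← Real.rpow_natCast (r ^ ((1:ℝ)/2)) 2, ← Real.rpow_mul hr.le]
    norm_num
  · rw [neg_div, Real.rpow_neg hr.le]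
  · rw [neg_div, Real.rpow_neg hr.le, show (3:ℝ)/2 = (1/2)*3 by norm_num,
      Real.rpow_mul hr.le]
    norm_cast

theorem key_grad (s c a r : ℝ) (ha : a ≠ 0) (har : a^2 = r) (h : s^2 + c^2 = 1) :
    (((0 * a + 1 * ((1/2) * a⁻¹)) * s)^2 + (1 * a * (c * (1/2)))^2 / r^2) * r = 1/4 := by
  subst har
  field_simp
  linear_combination (4:ℝ) * h

theorem key_lap (s a r : ℝ) (ha : a ≠ 0) (har : a^2 = r) :
    (((0 * a + 0 * ((1/2) * a⁻¹)) + (0 * ((1/2) * a⁻¹) + 1 * ((1/2) * (-(1/2) * (a^3)⁻¹)))) * s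
      + (0 * a + 1 * ((1/2) * a⁻¹)) * s / r + 1 * a * (-s * (1/2) * (1/2)) / r^2)^2 * r = 0 := by
  subst har
  have : ((0 * a + 0 * ((1/2) * a⁻¹)) + (0 * ((1/2) * a⁻¹) + 1 * ((1/2) * (-(1/2) * (a^3)⁻¹)))) * s
      + (0 * a + 1 * ((1/2) * a⁻¹)) * s / a^2 + 1 * a * (-s * (1/2) * (1/2)) / (a^2)^2 = 0 := by
    field_simp
    ring
  rw [this]
  ring

theorem key_rad (s a r : ℝ) (ha : a ≠ 0) (har : a^2 = r) :
    ((((0 * a + 0 * ((1/2) * a⁻¹)) + (0 * ((1/2) * a⁻¹) + 1 * ((1/2) * (-(1/2) * (a^3)⁻¹)))) * s)^2) * r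
      = (1/16) * s^2 * (r^2)⁻¹ := by
  subst har
  field_simp
  ring

end GA

/-- The Guseva function `f(r,φ) = ξ(r) r^(1/2) sin(φ/2)`, with `ξ ∈ C^∞(0,∞)`, `ξ = 1`
on `(0,R/2)`, `ξ = 0` for `r > R`, belongs to `H¹` of the half-disk (it and its polar
gradient are square integrable against `r dr dφ`), its polar Laplacian is in `L²`, it
satisfies the Dirichlet condition at `φ = 0` and the Neumann condition at `φ = π`, but
it is not in `H²`: its second radial derivative fails to be square integrable against
`r dr dφ`. -/
theorem stmt19 (R : ℝ) (hR : 0 < R) (ξ : ℝ → ℝ)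
    (hξ : ContDiffOn ℝ (⊤ : ℕ∞) ξ (Set.Ioi 0))
    (hξ1 : ∀ r ∈ Set.Ioo (0 : ℝ) (R / 2), ξ r = 1)
    (hξ0 : ∀ r : ℝ, R < r → ξ r = 0) :
    IntegrableOn (fun p => (guseva ξ p) ^ 2 * p.1) (halfDisk R) ∧
    IntegrableOn (fun p =>
        ((deriv (fun r => guseva ξ (r, p.2)) p.1) ^ 2
          + (deriv (fun t => guseva ξ (p.1, t)) p.2) ^ 2 / p.1 ^ 2) * p.1)
      (halfDisk R) ∧
    IntegrableOn (fun p =>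
        (deriv (deriv (fun r => guseva ξ (r, p.2))) p.1
          + deriv (fun r => guseva ξ (r, p.2)) p.1 / p.1
          + deriv (deriv (fun t => guseva ξ (p.1, t))) p.2 / p.1 ^ 2) ^ 2 * p.1)
      (halfDisk R) ∧
    (∀ r ∈ Set.Ioo (0 : ℝ) R, guseva ξ (r, 0) = 0) ∧
    (∀ r ∈ Set.Ioo (0 : ℝ) R, deriv (fun t => guseva ξ (r, t)) π = 0) ∧
    ¬ IntegrableOn (fun p =>
        (deriv (deriv (fun r => guseva ξ (r, p.2))) p.1) ^ 2 * p.1) (halfDisk R) := by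
  have hπ : (0:ℝ) < π := Real.pi_pos
  have hR2 : (0:ℝ) < R/2 := half_pos hR
  set K1 : Set (ℝ × ℝ) := Icc (0:ℝ) (R/2) ×ˢ Icc (0:ℝ) π with hK1def
  set K2 : Set (ℝ × ℝ) := Icc (R/2) R ×ˢ Icc (0:ℝ) π with hK2def
  set A1 : Set (ℝ × ℝ) := Ioo (0:ℝ) (R/2) ×ˢ Ioo (0:ℝ) π with hA1def
  set A2 : Set (ℝ × ℝ) := Ico (R/2) R ×ˢ Ioo (0:ℝ) π with hA2def
  have hsplit : halfDisk R = A1 ∪ A2 := by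
    rw [halfDisk, hA1def, hA2def, ← Set.union_prod,
      Set.Ioo_union_Ico_eq_Ioo hR2 (half_le_self hR.le)]
  have hA1m : MeasurableSet A1 := measurableSet_Ioo.prod measurableSet_Ioo
  have hA2m : MeasurableSet A2 := measurableSet_Ico.prod measurableSet_Ioo
  have hK1c : IsCompact K1 := isCompact_Icc.prod isCompact_Icc
  have hK2c : IsCompact K2 := isCompact_Icc.prod isCompact_Icc
  have hsub1 : A1 ⊆ K1 := Set.prod_mono Ioo_subset_Icc_self Ioo_subset_Icc_self
  have hsub2 : A2 ⊆ K2 := Set.prod_mono Ico_subset_Icc_self Ioo_subset_Icc_self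
  -- the cutoff is trivial near the origin
  have hdξ1 : ∀ r ∈ Ioo (0:ℝ) (R/2), deriv ξ r = 0 := by
    intro r hr
    have h1 : ξ =ᶠ[nhds r] fun _ => (1:ℝ) :=
      Filter.eventuallyEq_of_mem (isOpen_Ioo.mem_nhds hr) hξ1
    rw [h1.deriv_eq]
    exact deriv_const r 1
  have hdξ2 : ∀ r ∈ Ioo (0:ℝ) (R/2), deriv (deriv ξ) r = 0 := by
    intro r hr
    have h2 : deriv ξ =ᶠ[nhds r] fun _ => (0:ℝ) :=
      Filter.eventuallyEq_of_mem (isOpen_Ioo.mem_nhds hr) hdξ1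
    rw [h2.deriv_eq]
    exact deriv_const r 0
  -- continuity facts
  have hcξ : ContinuousOn ξ (Ioi 0) := hξ.continuousOn
  have hcξ' : ContinuousOn (deriv ξ) (Ioi 0) :=
    (hξ.deriv_of_isOpen (m := (⊤ : ℕ∞)) isOpen_Ioi (by simp)).continuousOn
  have hcξ'' : ContinuousOn (deriv (deriv ξ)) (Ioi 0) :=
    ((hξ.deriv_of_isOpen (m := (⊤ : ℕ∞)) isOpen_Ioi (by simp)).deriv_of_isOpen (m := (⊤ : ℕ∞)) isOpen_Ioi (by simp)).continuousOn
  have hfst2 : ∀ p ∈ K2, p.1 ∈ Ioi (0:ℝ) := fun p hp => lt_of_lt_of_le hR2 hp.1.1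
  have hcomp : ∀ {g : ℝ → ℝ}, ContinuousOn g (Ioi 0) →
      ContinuousOn (fun p : ℝ × ℝ => g p.1) K2 :=
    fun hg => hg.comp continuous_fst.continuousOn hfst2
  have hrpK : ∀ c : ℝ, ContinuousOn (fun p : ℝ × ℝ => p.1 ^ c) K2 :=
    fun c => hcomp (fun x hx =>
      (Real.continuousAt_rpow_const x c (Or.inl (ne_of_gt hx))).continuousWithinAt)
  have hsinc : Continuous (fun p : ℝ × ℝ => Real.sin (p.2/2)) :=
    Real.continuous_sin.comp (continuous_snd.div_const 2)
  have hcosc : Continuous (fun p : ℝ × ℝ => Real.cos (p.2/2)) :=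
    Real.continuous_cos.comp (continuous_snd.div_const 2)
  have hD1c : ContinuousOn (fun p : ℝ × ℝ => GA.D1 ξ p.1) K2 := by
    unfold GA.D1
    exact ((hcomp hcξ').mul (hrpK _)).add ((hcomp hcξ).mul (continuousOn_const.mul (hrpK _)))
  have hD2c : ContinuousOn (fun p : ℝ × ℝ => GA.D2 ξ p.1) K2 := by
    unfold GA.D2
    exact (((hcomp hcξ'').mul (hrpK _)).add ((hcomp hcξ').mul (continuousOn_const.mul (hrpK _)))).add
      (((hcomp hcξ').mul (continuousOn_const.mul (hrpK _))).add
        ((hcomp hcξ).mul (continuousOn_const.mul (continuousOn_const.mul (hrpK _)))))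
  have hne2 : ∀ p ∈ K2, (p.1 : ℝ) ^ 2 ≠ 0 := fun p hp => pow_ne_zero 2 (ne_of_gt (hfst2 p hp))
  have hne2' : ∀ p ∈ K2, (p.1 : ℝ) ≠ 0 := fun p hp => ne_of_gt (hfst2 p hp)
  -- Part 1
  have part1 : IntegrableOn (fun p : ℝ × ℝ => (guseva ξ p) ^ 2 * p.1) (halfDisk R) := by
    rw [hsplit]
    refine IntegrableOn.union ?_ ?_
    · have heq : EqOn (fun p : ℝ × ℝ => (guseva ξ p) ^ 2 * p.1)
          (fun p : ℝ × ℝ => (p.1 ^ ((1:ℝ)/2) * Real.sin (p.2/2)) ^ 2 * p.1) A1 := by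
        intro p hp
        simp only [guseva, hξ1 p.1 hp.1, one_mul]
      rw [integrableOn_congr_fun heq hA1m]
      refine (ContinuousOn.integrableOn_compact hK1c ?_).mono_set hsub1
      exact (((((Real.continuous_rpow_const (by norm_num)).comp continuous_fst).mul hsinc).pow 2).mul
        continuous_fst).continuousOn
    · refine (ContinuousOn.integrableOn_compact hK2c ?_).mono_set hsub2
      have hg : ContinuousOn (fun p : ℝ × ℝ => guseva ξ p) K2 := by
        unfold guseva
        exact ((hcomp hcξ).mul (hrpK _)).mul hsinc.continuousOn
      exact (hg.pow 2).mul continuous_fst.continuousOn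
  -- Part 2
  have part2 : IntegrableOn (fun p : ℝ × ℝ =>
      ((deriv (fun r => guseva ξ (r, p.2)) p.1) ^ 2
        + (deriv (fun t => guseva ξ (p.1, t)) p.2) ^ 2 / p.1 ^ 2) * p.1) (halfDisk R) := by
    rw [hsplit]
    refine IntegrableOn.union ?_ ?_
    · have heq : EqOn (fun p : ℝ × ℝ =>
          ((deriv (fun r => guseva ξ (r, p.2)) p.1) ^ 2
            + (deriv (fun t => guseva ξ (p.1, t)) p.2) ^ 2 / p.1 ^ 2) * p.1)
          (fun _ : ℝ × ℝ => (1/4 : ℝ)) A1 := by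
        intro p hp
        have hr0 : 0 < p.1 := hp.1.1
        obtain ⟨hu2, hun, hu3⟩ := GA.upow hr0
        have ha : p.1 ^ ((1:ℝ)/2) ≠ 0 := ne_of_gt (Real.rpow_pos_of_pos hr0 _)
        simp only [GA.deriv_r hξ hr0, GA.deriv_t, GA.D1, hξ1 p.1 hp.1, hdξ1 p.1 hp.1, hun]
        exact GA.key_grad _ _ _ _ ha hu2 (Real.sin_sq_add_cos_sq _)
      rw [integrableOn_congr_fun heq hA1m]
      exact (ContinuousOn.integrableOn_compact hK1c continuousOn_const).mono_set hsub1
    · have heq : EqOn (fun p : ℝ × ℝ =>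
          ((deriv (fun r => guseva ξ (r, p.2)) p.1) ^ 2
            + (deriv (fun t => guseva ξ (p.1, t)) p.2) ^ 2 / p.1 ^ 2) * p.1)
          (fun p : ℝ × ℝ =>
            ((GA.D1 ξ p.1 * Real.sin (p.2/2)) ^ 2
              + (ξ p.1 * p.1 ^ ((1:ℝ)/2) * (Real.cos (p.2/2) * (1/2))) ^ 2 / p.1 ^ 2) * p.1) A2 := by
        intro p hp
        have hr0 : 0 < p.1 := lt_of_lt_of_le hR2 hp.1.1
        simp only [GA.deriv_r hξ hr0, GA.deriv_t]
      rw [integrableOn_congr_fun heq hA2m]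
      refine (ContinuousOn.integrableOn_compact hK2c ?_).mono_set hsub2
      refine (ContinuousOn.add ((hD1c.mul hsinc.continuousOn).pow 2) ?_).mul
        continuous_fst.continuousOn
      refine ContinuousOn.div ?_ ((continuous_fst.pow 2).continuousOn) hne2
      exact ((((hcomp hcξ).mul (hrpK _)).mul
        (hcosc.continuousOn.mul continuousOn_const)).pow 2)
  -- Part 3
  have part3 : IntegrableOn (fun p : ℝ × ℝ =>
      (deriv (deriv (fun r => guseva ξ (r, p.2))) p.1
        + deriv (fun r => guseva ξ (r, p.2)) p.1 / p.1
        + deriv (deriv (fun t => guseva ξ (p.1, t))) p.2 / p.1 ^ 2) ^ 2 * p.1) (halfDisk R) := by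
    rw [hsplit]
    refine IntegrableOn.union ?_ ?_
    · have heq : EqOn (fun p : ℝ × ℝ =>
          (deriv (deriv (fun r => guseva ξ (r, p.2))) p.1
            + deriv (fun r => guseva ξ (r, p.2)) p.1 / p.1
            + deriv (deriv (fun t => guseva ξ (p.1, t))) p.2 / p.1 ^ 2) ^ 2 * p.1)
          (fun _ : ℝ × ℝ => (0:ℝ)) A1 := by
        intro p hp
        have hr0 : 0 < p.1 := hp.1.1
        obtain ⟨hu2, hun, hu3⟩ := GA.upow hr0
        have ha : p.1 ^ ((1:ℝ)/2) ≠ 0 := ne_of_gt (Real.rpow_pos_of_pos hr0 _)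
        simp only [GA.deriv_rr hξ hr0, GA.deriv_r hξ hr0, GA.deriv_tt, GA.D1, GA.D2,
          hξ1 p.1 hp.1, hdξ1 p.1 hp.1, hdξ2 p.1 hp.1, hun, hu3]
        exact GA.key_lap _ _ _ ha hu2
      rw [integrableOn_congr_fun heq hA1m]
      exact (ContinuousOn.integrableOn_compact hK1c continuousOn_const).mono_set hsub1
    · have heq : EqOn (fun p : ℝ × ℝ =>
          (deriv (deriv (fun r => guseva ξ (r, p.2))) p.1
            + deriv (fun r => guseva ξ (r, p.2)) p.1 / p.1
            + deriv (deriv (fun t => guseva ξ (p.1, t))) p.2 / p.1 ^ 2) ^ 2 * p.1)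
          (fun p : ℝ × ℝ =>
            (GA.D2 ξ p.1 * Real.sin (p.2/2)
              + GA.D1 ξ p.1 * Real.sin (p.2/2) / p.1
              + ξ p.1 * p.1 ^ ((1:ℝ)/2) * (-Real.sin (p.2/2) * (1/2) * (1/2)) / p.1 ^ 2) ^ 2 * p.1) A2 := by
        intro p hp
        have hr0 : 0 < p.1 := lt_of_lt_of_le hR2 hp.1.1
        simp only [GA.deriv_rr hξ hr0, GA.deriv_r hξ hr0, GA.deriv_tt]
      rw [integrableOn_congr_fun heq hA2m]
      refine (ContinuousOn.integrableOn_compact hK2c ?_).mono_set hsub2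
      refine (ContinuousOn.pow ?_ 2).mul continuous_fst.continuousOn
      refine ((hD2c.mul hsinc.continuousOn).add ?_).add ?_
      · exact ((hD1c.mul hsinc.continuousOn).div continuous_fst.continuousOn hne2')
      · refine ContinuousOn.div ?_ (continuous_fst.pow 2).continuousOn hne2
        exact ((hcomp hcξ).mul (hrpK _)).mul
          ((hsinc.continuousOn.neg.mul continuousOn_const).mul continuousOn_const)
  -- Boundary conditions
  have part4 : ∀ r ∈ Set.Ioo (0 : ℝ) R, guseva ξ (r, 0) = 0 := by
    intro r _
    simp [guseva]
  have part5 : ∀ r ∈ Set.Ioo (0 : ℝ) R, deriv (fun t => guseva ξ (r, t)) π = 0 := by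
    intro r _
    rw [GA.deriv_t]
    simp [Real.cos_pi_div_two]
  -- Part 6 : the negative result
  have part6 : ¬ IntegrableOn (fun p : ℝ × ℝ =>
      (deriv (deriv (fun r => guseva ξ (r, p.2))) p.1) ^ 2 * p.1) (halfDisk R) := by
    intro H
    set S : Set (ℝ × ℝ) := Ioo (0:ℝ) (R/2) ×ˢ Ioo (π/2) π with hSdef
    have hSm : MeasurableSet S := measurableSet_Ioo.prod measurableSet_Ioo
    have hSsub : S ⊆ halfDisk R := by
      rw [halfDisk]
      exact Set.prod_mono (Ioo_subset_Ioo_right (half_le_self hR.le))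
        (Ioo_subset_Ioo_left (by linarith))
    have HS : IntegrableOn (fun p : ℝ × ℝ =>
        (deriv (deriv (fun r => guseva ξ (r, p.2))) p.1) ^ 2 * p.1) S := H.mono_set hSsub
    have hbound : ∀ p ∈ S, (1/32 : ℝ) * ((p.1 ^ 2)⁻¹) ≤
        (deriv (deriv (fun r => guseva ξ (r, p.2))) p.1) ^ 2 * p.1 := by
      intro p hp
      have hr0 : 0 < p.1 := hp.1.1
      have hrmem : p.1 ∈ Ioo (0:ℝ) (R/2) := hp.1
      obtain ⟨hu2, hun, hu3⟩ := GA.upow hr0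
      have ha : p.1 ^ ((1:ℝ)/2) ≠ 0 := ne_of_gt (Real.rpow_pos_of_pos hr0 _)
      have hval : (deriv (deriv (fun r => guseva ξ (r, p.2))) p.1) ^ 2 * p.1
          = (1/16) * (Real.sin (p.2/2))^2 * ((p.1 ^ 2)⁻¹) := by
        simp only [GA.deriv_rr hξ hr0, GA.D2, hξ1 p.1 hrmem, hdξ1 p.1 hrmem,
          hdξ2 p.1 hrmem, hun, hu3]
        exact GA.key_rad _ _ _ ha hu2
      rw [hval]
      have hs : (1/2 : ℝ) ≤ (Real.sin (p.2/2))^2 := by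
        have hφ := hp.2
        have h1 : Real.sin (π/4) < Real.sin (p.2/2) := by
          apply Real.sin_lt_sin_of_lt_of_le_pi_div_two
          · linarith
          · linarith [hφ.2]
          · linarith [hφ.1]
        rw [Real.sin_pi_div_four] at h1
        have h2 : (0:ℝ) ≤ Real.sqrt 2 := Real.sqrt_nonneg 2
        have h3 : (Real.sqrt 2)^2 = 2 := Real.sq_sqrt (by norm_num)
        nlinarith
      have hpos : (0:ℝ) < (p.1 ^ 2)⁻¹ := by positivity
      nlinarith
    have hgme : AEStronglyMeasurable (fun p : ℝ × ℝ => (1/32 : ℝ) * ((p.1 ^ 2)⁻¹))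
        (volume.restrict S) :=
      (((measurable_fst.pow_const 2).inv).const_mul _).aestronglyMeasurable
    have Hg : IntegrableOn (fun p : ℝ × ℝ => (1/32 : ℝ) * ((p.1 ^ 2)⁻¹)) S := by
      refine Integrable.mono' HS hgme ?_
      refine Filter.eventually_of_mem (self_mem_ae_restrict hSm) (fun p hp => ?_)
      have h1 : (0:ℝ) ≤ (1/32 : ℝ) * ((p.1 ^ 2)⁻¹) := by positivity
      rw [Real.norm_eq_abs, abs_of_nonneg h1]
      exact hbound p hp
    rw [IntegrableOn, hSdef, Measure.volume_eq_prod, ← Measure.prod_restrict] at Hg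
    have hgme2 : AEStronglyMeasurable (fun p : ℝ × ℝ => (1/32 : ℝ) * ((p.1 ^ 2)⁻¹))
        ((volume.restrict (Ioo (0:ℝ) (R/2))).prod (volume.restrict (Ioo (π/2) π))) :=
      (((measurable_fst.pow_const 2).inv).const_mul _).aestronglyMeasurable
    have h2 := ((integrable_prod_iff hgme2).mp Hg).2
    simp only [integral_const, Measure.restrict_apply, MeasurableSet.univ, univ_inter,
      Real.volume_Ioo, smul_eq_mul] at h2
    have hc : (ENNReal.ofReal (π - π/2)).toReal = π/2 := by
      rw [ENNReal.toReal_ofReal (by linarith)]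
      ring
    have h5 : IntegrableOn (fun x : ℝ => (x ^ 2)⁻¹) (Ioo (0:ℝ) (R/2)) := by
      have h6 := h2.const_mul (64/π)
      refine h6.congr (Filter.Eventually.of_forall fun x => ?_)
      simp only [measureReal_def, Measure.restrict_apply_univ, Real.volume_Ioo, hc, Real.norm_eq_abs,
        abs_of_nonneg (by positivity : (0:ℝ) ≤ (1/32 : ℝ) * ((x ^ 2)⁻¹))]
      field_simp
      ring
    have h7 : IntegrableOn (fun x : ℝ => x ^ (-2 : ℝ)) (Ioo (0:ℝ) (R/2)) := by
      refine (integrableOn_congr_fun (fun x hx => ?_) measurableSet_Ioo).mpr h5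
      rw [Real.rpow_neg hx.1.le]
      norm_cast
    rw [intervalIntegral.integrableOn_Ioo_rpow_iff hR2] at h7
    norm_num at h7
  exact ⟨part1, part2, part3, part4, part5, part6⟩

end
end
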